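/- For any constant α > 0 and any integer k ≥ 3, the following holds for all sufficiently large n ∈ ℕ: there exists an n-vertex graph G with α*(G) < αn and girth greater than k (that is, G contains no cycle of length at most k). -/

import Mathlib

open Finset

namespace RTT

variable {k n : ℕ}

/-- `S` spans a copy of the `k`-vertex graph `F` in `G`:
there is an injective graph homomorphism from `F` to `G` with image exactly `S`. -/
def SpansCopy (F : SimpleGraph (Fin k)) (G : SimpleGraph (Fin n))
    (S : Finset (Fin n)) : Prop :=
  ∃ f : Fin k → Fin n, Function.Injective f ∧
    (∀ a b, F.Adj a b → G.Adj (f a) (f b)) ∧ Finset.image f Finset.univ = S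

/-- `T` is an `F`-tiling in `G`: a collection of pairwise vertex-disjoint vertex sets,
each spanning a copy of `F`. -/
def IsTiling (F : SimpleGraph (Fin k)) (G : SimpleGraph (Fin n))
    (T : Finset (Finset (Fin n))) : Prop :=
  (∀ S ∈ T, SpansCopy F G S) ∧ ∀ S ∈ T, ∀ S' ∈ T, S ≠ S' → Disjoint S S'

/-- The induced subgraph of `G` on the vertex set `A` has a perfect `F`-tiling. -/
def PerfTilingOn (F : SimpleGraph (Fin k)) (G : SimpleGraph (Fin n))
    (A : Finset (Fin n)) : Prop :=
  ∃ T : Finset (Finset (Fin n)), IsTiling F G T ∧ T.biUnion id = A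

/-- The minimum degree of `G` is at least `x`. -/
def MinDegGE (G : SimpleGraph (Fin n)) (x : ℝ) : Prop :=
  ∀ v : Fin n, x ≤ ((G.neighborSet v).ncard : ℝ)

/-- The `r`-independence number of `G` is at most `x`: every vertex set whose induced
subgraph contains no copy of `K_r` has size at most `x`. -/
def IndepBound (G : SimpleGraph (Fin n)) (r : ℕ) (x : ℝ) : Prop :=
  ∀ S : Finset (Fin n), (∀ T ⊆ S, ¬ G.IsNClique r T) → (S.card : ℝ) ≤ x

/-- `α*(G) ≤ x`: every bipartite hole of `G` has size at most `x`. -/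
def HoleBound (G : SimpleGraph (Fin n)) (x : ℝ) : Prop :=
  ∀ (s : ℕ) (U₁ U₂ : Finset (Fin n)), Disjoint U₁ U₂ → U₁.card = s → U₂.card = s →
    (∀ u ∈ U₁, ∀ v ∈ U₂, ¬ G.Adj u v) → (s : ℝ) ≤ x

/-- `A` is a `ξ`-absorbing set with respect to `V'` (for the `k`-vertex graph `F`
in the `n`-vertex graph `G`). -/
def IsAbsorbingSet (F : SimpleGraph (Fin k)) (G : SimpleGraph (Fin n)) (ξ : ℝ)
    (V' A : Finset (Fin n)) : Prop :=
  ∀ U : Finset (Fin n), U ⊆ V' \ A → (U.card : ℝ) ≤ ξ * n →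
    k ∣ (A ∪ U).card → PerfTilingOn F G (A ∪ U)

/-- `A` is an `(F,t)`-absorber for the `k`-set `S`. -/
def IsAbsorber (F : SimpleGraph (Fin k)) (G : SimpleGraph (Fin n)) (t : ℕ)
    (S A : Finset (Fin n)) : Prop :=
  Disjoint A S ∧ A.card ≤ k ^ 2 * t ∧ PerfTilingOn F G A ∧ PerfTilingOn F G (A ∪ S)

/-- `S` has a family of at least `x` pairwise vertex-disjoint `(F,t)`-absorbers in `G`. -/
def HasManyAbsorbers (F : SimpleGraph (Fin k)) (G : SimpleGraph (Fin n)) (t : ℕ)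
    (S : Finset (Fin n)) (x : ℝ) : Prop :=
  ∃ 𝒜 : Finset (Finset (Fin n)), x ≤ (𝒜.card : ℝ) ∧
    (∀ A ∈ 𝒜, IsAbsorber F G t S A) ∧
    ∀ A ∈ 𝒜, ∀ A' ∈ 𝒜, A ≠ A' → Disjoint A A'

/-- `𝒮` is an `F`-fan at `v` in `U`: a collection of pairwise disjoint `(k-1)`-sets
`S ⊆ U \ {v}` such that `{v} ∪ S` spans a copy of `F`; its size is `𝒮.card`. -/
def IsFan (F : SimpleGraph (Fin k)) (G : SimpleGraph (Fin n)) (v : Fin n)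
    (U : Finset (Fin n)) (𝒮 : Finset (Finset (Fin n))) : Prop :=
  (∀ S ∈ 𝒮, S ⊆ U.erase v ∧ S.card = k - 1 ∧ SpansCopy F G (insert v S)) ∧
    ∀ S ∈ 𝒮, ∀ S' ∈ 𝒮, S ≠ S' → Disjoint S S'

/-- `u` and `v` are `(F, m, t)`-reachable in `G`. -/
def FReachable (F : SimpleGraph (Fin k)) (G : SimpleGraph (Fin n)) (m : ℝ) (t : ℕ)
    (u v : Fin n) : Prop :=
  ∀ W : Finset (Fin n), (W.card : ℝ) ≤ m →
    ∃ S : Finset (Fin n), Disjoint S W ∧ u ∉ S ∧ v ∉ S ∧ S.card ≤ k * t - 1 ∧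
      PerfTilingOn F G (insert u S) ∧ PerfTilingOn F G (insert v S)

/-- `U` is `(F, m, t)`-closed in `G`. -/
def FClosed (F : SimpleGraph (Fin k)) (G : SimpleGraph (Fin n)) (m : ℝ) (t : ℕ)
    (U : Finset (Fin n)) : Prop :=
  ∀ u ∈ U, ∀ v ∈ U, u ≠ v → FReachable F G m t u v

/-- `P` is a partition of the vertex set of an `n`-vertex graph into `C` parts. -/
def IsPartition {C : ℕ} (P : Fin C → Finset (Fin n)) : Prop :=
  (∀ i j, i ≠ j → Disjoint (P i) (P j)) ∧ Finset.univ.biUnion P = Finset.univ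

/-- The `k`-vector `v` is `(F, β)`-robust with respect to the partition `P`:
it has coordinate sum `k`, and avoiding any set `W` of at most `βn` vertices there is
a copy of `F` whose vertex set has index vector `v`. -/
def RobustVec (F : SimpleGraph (Fin k)) (G : SimpleGraph (Fin n)) {C : ℕ}
    (P : Fin C → Finset (Fin n)) (β : ℝ) (v : Fin C → ℕ) : Prop :=
  (∑ i, v i) = k ∧
    ∀ W : Finset (Fin n), (W.card : ℝ) ≤ β * n →
      ∃ S : Finset (Fin n), Disjoint S W ∧ SpansCopy F G S ∧ ∀ i, (S ∩ P i).card = v i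

end RTT

/-!
Deletion method. Take the random graph `G(M, p)` on `M = n + kT` vertices with `p ≈ c / n` and
`c ≥ 4 / α²`. The expected number of cycles of length at most `k` is at most
`k (Mp)^k ≤ k (4c)^k`, so by Markov's inequality fewer than a third of the graphs have more than
`T = 3k(4c)^k` of them. A fixed pair of disjoint `⌈αn⌉`-sets spans no edge with probability
`(1 - p)^{⌈αn⌉²} ≲ 2^{-pα²n²} ≤ 2^{-4n}`, while there are at most `4^M ≤ 2^{4n} / 4` such pairs,
so at most a third of the graphs have a bipartite hole of size `⌈αn⌉`. Deleting the at most `kT`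
vertices on short cycles of a remaining graph leaves at least `n` vertices, and any `n` of them
induce the required graph.
-/

theorem Fintype.card_filter_forall_mem_mul_pow {ι β : Type*} [Fintype ι] [DecidableEq ι]
    [Fintype β] [DecidableEq β] (P : Finset ι) (S : Finset β) :
    #{f : ι → β | ∀ c ∈ P, f c ∈ S} * card β ^ #P = #S ^ #P * card β ^ card ι := by
  have hpi : ({f : ι → β | ∀ c ∈ P, f c ∈ S} : Finset _) =
      piFinset fun c => if c ∈ P then S else univ := by
    ext f
    simp only [mem_filter, mem_univ, true_and, mem_piFinset]
    exact ⟨fun h c => by split_ifs with hc <;> simp [h c, hc],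
      fun h c hc => by simpa [hc] using h c⟩
  rw [hpi, card_piFinset, ← prod_mul_prod_compl P]
  simp only [apply_ite Finset.card, card_univ]
  rw [prod_ite_of_true fun _ h => h, prod_ite_of_false fun _ h => mem_compl.1 h, prod_const,
    prod_const, mul_assoc, ← pow_add, card_compl_add_card]

lemma two_mul_pow_self_le_succ_pow {B : ℕ} (hB : 0 < B) : 2 * B ^ B ≤ (B + 1) ^ B := by
  have hB' : (0 : ℚ) < B := by exact_mod_cast hB
  have bernoulli := one_add_mul_le_pow (a := (B : ℚ)⁻¹) (by linarith [inv_pos.2 hB']) B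
  rw [mul_inv_cancel₀ hB'.ne'] at bernoulli
  have : (2 * B ^ B : ℚ) ≤ (B + 1) ^ B := by
    calc (2 * B ^ B : ℚ) = (1 + 1) * B ^ B := by ring
      _ ≤ (1 + (B : ℚ)⁻¹) ^ B * B ^ B := by gcongr
      _ = (B + 1) ^ B := by rw [← mul_pow, add_mul, inv_mul_cancel₀ hB'.ne', one_mul, add_comm]
  exact_mod_cast this

/-- `(1 - 1 / (B + 1)) ^ m ≤ 2 ^ (-⌊m / B⌋)`, a discrete form of `(1 - p) ^ m ≤ exp (-p m)`. -/
lemma two_pow_div_mul_pow_le_succ_pow {B : ℕ} (hB : 0 < B) (m : ℕ) :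
    2 ^ (m / B) * B ^ m ≤ (B + 1) ^ m := by
  calc 2 ^ (m / B) * B ^ m = (2 * B ^ B) ^ (m / B) * B ^ (m % B) := by
        rw [mul_pow, ← pow_mul, mul_assoc, ← pow_add, Nat.div_add_mod]
    _ ≤ ((B + 1) ^ B) ^ (m / B) * (B + 1) ^ (m % B) := by
        gcongr
        · exact two_mul_pow_self_le_succ_pow hB
        · omega
    _ = (B + 1) ^ m := by rw [← pow_mul, ← pow_add, Nat.div_add_mod]

lemma val_finRotate {ℓ : ℕ} (i : Fin ℓ) :
    (finRotate ℓ i : ℕ) = if (i : ℕ) + 1 = ℓ then 0 else (i : ℕ) + 1 := by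
  cases ℓ with
  | zero => exact i.elim0
  | succ m =>
    rw [coe_finRotate]
    simp [Fin.ext_iff]

namespace SimpleGraph

variable {V W : Type*} (G : SimpleGraph V) {ℓ : ℕ}

def IsCycleTuple (t : Fin ℓ → V) : Prop :=
  Function.Injective t ∧ ∀ i, G.Adj (t i) (t (finRotate ℓ i))

def HasBipartiteHole (s : ℕ) : Prop :=
  ∃ U₁ U₂ : Finset V, Disjoint U₁ U₂ ∧ #U₁ = s ∧ #U₂ = s ∧ ∀ u ∈ U₁, ∀ v ∈ U₂, ¬ G.Adj u v

variable {G}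

instance [DecidableEq V] [DecidableRel G.Adj] : DecidablePred (G.IsCycleTuple (ℓ := ℓ)) :=
  fun _ => inferInstanceAs (Decidable (_ ∧ _))

lemma Walk.IsCycle.isCycleTuple_getVert {v : V} {p : G.Walk v v} (hp : p.IsCycle) :
    G.IsCycleTuple fun i : Fin p.length => p.getVert i := by
  have h3 := hp.three_le_length
  refine ⟨fun i j h => Fin.ext <| hp.getVert_injOn' (by simp; omega) (by simp; omega) h,
    fun i => ?_⟩
  have hadj := p.adj_getVert_succ i.2
  show G.Adj (p.getVert i) (p.getVert (finRotate _ i))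
  rw [val_finRotate]
  split_ifs with hi
  · rw [p.getVert_zero]
    rwa [hi, p.getVert_length] at hadj
  · exact hadj

lemma IsCycleTuple.comap {e : W ↪ V} {t : Fin ℓ → W} (ht : (G.comap e).IsCycleTuple t) :
    G.IsCycleTuple (e ∘ t) :=
  ⟨e.injective.comp ht.1, ht.2⟩

lemma injective_cycleEdge (hℓ : 3 ≤ ℓ) {t : Fin ℓ → V} (ht : Function.Injective t) :
    Function.Injective fun i => s(t i, t (finRotate ℓ i)) := by
  intro i j hij
  rcases Sym2.eq_iff.1 hij with ⟨h, -⟩ | ⟨h₁, h₂⟩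
  · exact ht h
  · have h₁ := congrArg Fin.val (ht h₁)
    have h₂ := congrArg Fin.val (ht h₂)
    have := i.2
    have := j.2
    rw [val_finRotate] at h₁ h₂
    split_ifs at h₁ h₂ <;> omega

section ShortCycles

variable [Fintype V] [DecidableEq V] (G) [DecidableRel G.Adj]

def cycleTuples (ℓ : ℕ) : Finset (Fin ℓ → V) :=
  {t | G.IsCycleTuple t}

def shortCycleCount (k : ℕ) : ℕ :=
  ∑ ℓ ∈ Icc 3 k, #(G.cycleTuples ℓ)

def shortCycleVerts (k : ℕ) : Finset V :=
  (Icc 3 k).biUnion fun ℓ => (G.cycleTuples ℓ).biUnion fun t => univ.image t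

lemma card_shortCycleVerts_le (k : ℕ) : #(G.shortCycleVerts k) ≤ k * G.shortCycleCount k := by
  calc #(G.shortCycleVerts k)
      ≤ ∑ ℓ ∈ Icc 3 k, ∑ t ∈ G.cycleTuples ℓ, #(univ.image t) :=
        card_biUnion_le.trans <| sum_le_sum fun _ _ => card_biUnion_le
    _ ≤ ∑ ℓ ∈ Icc 3 k, ∑ t ∈ G.cycleTuples ℓ, k := by
        gcongr with ℓ hℓ t
        exact card_image_le.trans <| by simpa using (mem_Icc.1 hℓ).2
    _ = k * G.shortCycleCount k := by simp [shortCycleCount, mul_sum, mul_comm]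

lemma exists_embedding_girth_gt {n k : ℕ} (hn : n + k * G.shortCycleCount k ≤ Fintype.card V) :
    ∃ e : Fin n ↪ V, ∀ (v : Fin n) (p : (G.comap e).Walk v v), p.IsCycle → k < p.length := by
  have hD : Fintype.card (Fin n) ≤ Fintype.card {v // v ∈ (G.shortCycleVerts k)ᶜ} := by
    rw [Fintype.card_fin, Fintype.card_coe, card_compl]
    have := G.card_shortCycleVerts_le k
    omega
  obtain ⟨e⟩ := Function.Embedding.nonempty_of_card_le hD
  refine ⟨e.trans (.subtype _), fun v p hp => ?_⟩
  by_contra! hk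
  have ht := hp.isCycleTuple_getVert.comap
  have hmem : (e.trans (.subtype _)) (p.getVert 0) ∈ G.shortCycleVerts k :=
    mem_biUnion.2 ⟨p.length, mem_Icc.2 ⟨hp.three_le_length, hk⟩, mem_biUnion.2
      ⟨_, mem_filter.2 ⟨mem_univ _, ht⟩,
        mem_image.2 ⟨⟨0, by have := hp.three_le_length; omega⟩, mem_univ _, rfl⟩⟩⟩
  exact mem_compl.1 (e (p.getVert 0)).2 hmem

end ShortCycles

instance [Fintype V] [DecidableEq V] [DecidableRel G.Adj] (s : ℕ) :
    Decidable (G.HasBipartiteHole s) :=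
  inferInstanceAs (Decidable (∃ _, _))

lemma HasBipartiteHole.mono {s t : ℕ} (h : G.HasBipartiteHole s) (hts : t ≤ s) :
    G.HasBipartiteHole t := by
  obtain ⟨U₁, U₂, hd, h₁, h₂, hU⟩ := h
  obtain ⟨W₁, hW₁, hc₁⟩ := exists_subset_card_eq (h₁ ▸ hts)
  obtain ⟨W₂, hW₂, hc₂⟩ := exists_subset_card_eq (h₂ ▸ hts)
  exact ⟨W₁, W₂, hd.mono hW₁ hW₂, hc₁, hc₂, fun u hu v hv => hU u (hW₁ hu) v (hW₂ hv)⟩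

lemma HasBipartiteHole.of_comap [DecidableEq V] {e : W ↪ V} {s : ℕ}
    (h : (G.comap e).HasBipartiteHole s) : G.HasBipartiteHole s := by
  obtain ⟨U₁, U₂, hd, h₁, h₂, hU⟩ := h
  refine ⟨U₁.map e, U₂.map e, (disjoint_map e).2 hd, by rwa [card_map], by rwa [card_map], ?_⟩
  simp only [mem_map]
  rintro _ ⟨u, hu, rfl⟩ _ ⟨v, hv, rfl⟩
  exact hU u hu v hv

section RandomGraph

variable {B : ℕ}

/-- For uniformly random `f`, this is the binomial random graph `G(V, 1 / (B + 1))`. -/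
def ofColouring (f : Sym2 V → Fin (B + 1)) : SimpleGraph V :=
  fromEdgeSet {e | f e = 0}

lemma ofColouring_adj {f : Sym2 V → Fin (B + 1)} {u v : V} :
    (ofColouring f).Adj u v ↔ f s(u, v) = 0 ∧ u ≠ v :=
  fromEdgeSet_adj _

variable [Fintype V] [DecidableEq V]

instance (f : Sym2 V → Fin (B + 1)) : DecidableRel (ofColouring f).Adj :=
  inferInstanceAs (DecidableRel (fromEdgeSet _).Adj)

lemma card_filter_isCycleTuple_mul_le (hℓ : 3 ≤ ℓ) (t : Fin ℓ → V) :
    #{f : Sym2 V → Fin (B + 1) | (ofColouring f).IsCycleTuple t} * (B + 1) ^ ℓ ≤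
      (B + 1) ^ Fintype.card (Sym2 V) := by
  by_cases ht : Function.Injective t
  · set cycleEdges := univ.image fun i => s(t i, t (finRotate ℓ i))
    have hcard : #cycleEdges = ℓ := by
      rw [card_image_of_injective _ (injective_cycleEdge hℓ ht), card_univ, Fintype.card_fin]
    have hsub : ({f | (ofColouring f).IsCycleTuple t} : Finset (Sym2 V → Fin (B + 1))) ⊆
        ({f | ∀ e ∈ cycleEdges, f e ∈ ({0} : Finset (Fin (B + 1)))} : Finset _) := by
      intro f hf
      simp only [mem_filter, mem_univ, true_and, mem_image, mem_singleton, cycleEdges] at hf ⊢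
      rintro _ ⟨i, rfl⟩
      exact (ofColouring_adj.1 (hf.2 i)).1
    have := Fintype.card_filter_forall_mem_mul_pow cycleEdges ({0} : Finset (Fin (B + 1)))
    rw [hcard, Fintype.card_fin, card_singleton, one_pow, one_mul] at this
    exact this ▸ Nat.mul_le_mul_right _ (card_le_card hsub)
  · rw [filter_false_of_mem fun f _ h => ht h.1, card_empty, zero_mul]
    exact Nat.zero_le _

lemma card_filter_forall_not_adj_mul_le {s : ℕ} {U₁ U₂ : Finset V} (hd : Disjoint U₁ U₂)
    (h₁ : #U₁ = s) (h₂ : #U₂ = s) :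
    #{f : Sym2 V → Fin (B + 1) | ∀ u ∈ U₁, ∀ v ∈ U₂, ¬ (ofColouring f).Adj u v} *
        (B + 1) ^ (s * s) ≤ B ^ (s * s) * (B + 1) ^ Fintype.card (Sym2 V) := by
  set holeEdges := (U₁ ×ˢ U₂).image fun p => s(p.1, p.2)
  have hcard : #holeEdges = s * s := by
    rw [card_image_of_injOn, card_product, h₁, h₂]
    rintro ⟨u, v⟩ huv ⟨u', v'⟩ huv' h
    simp only [coe_product, Set.mem_prod, mem_coe] at huv huv'
    rcases Sym2.eq_iff.1 h with ⟨rfl, rfl⟩ | ⟨rfl, rfl⟩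
    · rfl
    · exact (Finset.disjoint_left.1 hd huv.1 huv'.2).elim
  have hsub : ({f | ∀ u ∈ U₁, ∀ v ∈ U₂, ¬ (ofColouring f).Adj u v} :
        Finset (Sym2 V → Fin (B + 1))) ⊆
        ({f | ∀ e ∈ holeEdges, f e ∈ ({0}ᶜ : Finset (Fin (B + 1)))} : Finset _) := by
    intro f hf
    simp only [mem_filter, mem_univ, true_and, mem_image, mem_product, holeEdges] at hf ⊢
    rintro _ ⟨⟨u, v⟩, ⟨hu, hv⟩, rfl⟩
    have hne : u ≠ v := fun h => Finset.disjoint_left.1 hd hu (h ▸ hv)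
    simpa [ofColouring_adj, hne] using hf u hu v hv
  have := Fintype.card_filter_forall_mem_mul_pow holeEdges ({0}ᶜ : Finset (Fin (B + 1)))
  rw [hcard, Fintype.card_fin, card_compl, card_singleton, Fintype.card_fin,
    Nat.add_sub_cancel] at this
  exact this ▸ Nat.mul_le_mul_right _ (card_le_card hsub)

variable {A : ℕ}

lemma sum_card_cycleTuples_ofColouring_le (hV : Fintype.card V ≤ A * (B + 1))
    (hℓ : 3 ≤ ℓ) :
    ∑ f : Sym2 V → Fin (B + 1), #((ofColouring f).cycleTuples ℓ) ≤
      A ^ ℓ * (B + 1) ^ Fintype.card (Sym2 V) := by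
  have hswap : ∑ f : Sym2 V → Fin (B + 1), #((ofColouring f).cycleTuples ℓ) =
      ∑ t : Fin ℓ → V, #{f : Sym2 V → Fin (B + 1) | (ofColouring f).IsCycleTuple t} :=
    sum_card_bipartiteAbove_eq_sum_card_bipartiteBelow _
  refine Nat.le_of_mul_le_mul_right ?_ (pow_pos B.succ_pos ℓ)
  calc (∑ f : Sym2 V → Fin (B + 1), #((ofColouring f).cycleTuples ℓ)) * (B + 1) ^ ℓ
      = ∑ t : Fin ℓ → V, #{f : Sym2 V → Fin (B + 1) | (ofColouring f).IsCycleTuple t} *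
          (B + 1) ^ ℓ := by rw [hswap, sum_mul]
    _ ≤ ∑ _t : Fin ℓ → V, (B + 1) ^ Fintype.card (Sym2 V) :=
        sum_le_sum fun t _ => card_filter_isCycleTuple_mul_le hℓ t
    _ = Fintype.card V ^ ℓ * (B + 1) ^ Fintype.card (Sym2 V) := by simp
    _ ≤ (A * (B + 1)) ^ ℓ * (B + 1) ^ Fintype.card (Sym2 V) := by gcongr
    _ = A ^ ℓ * (B + 1) ^ Fintype.card (Sym2 V) * (B + 1) ^ ℓ := by rw [mul_pow]; ring

lemma sum_shortCycleCount_ofColouring_le (hV : Fintype.card V ≤ A * (B + 1)) (k : ℕ) :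
    ∑ f : Sym2 V → Fin (B + 1), (ofColouring f).shortCycleCount k ≤
      k * A ^ k * (B + 1) ^ Fintype.card (Sym2 V) := by
  calc ∑ f : Sym2 V → Fin (B + 1), (ofColouring f).shortCycleCount k
      = ∑ ℓ ∈ Icc 3 k, ∑ f : Sym2 V → Fin (B + 1), #((ofColouring f).cycleTuples ℓ) :=
        sum_comm
    _ ≤ ∑ _ℓ ∈ Icc 3 k, A ^ k * (B + 1) ^ Fintype.card (Sym2 V) := by
        refine sum_le_sum fun ℓ hℓ => ?_
        obtain ⟨h3ℓ, hℓk⟩ := mem_Icc.1 hℓ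
        refine (sum_card_cycleTuples_ofColouring_le hV h3ℓ).trans ?_
        rcases A.eq_zero_or_pos with rfl | hA
        · simp [zero_pow (by omega : ℓ ≠ 0)]
        · gcongr
    _ ≤ k * A ^ k * (B + 1) ^ Fintype.card (Sym2 V) := by
        rw [sum_const, Nat.card_Icc, smul_eq_mul, mul_assoc]
        gcongr
        omega

lemma three_mul_card_many_short_cycles_lt (hV : Fintype.card V ≤ A * (B + 1)) (k : ℕ) :
    3 * #{f : Sym2 V → Fin (B + 1) | 3 * k * A ^ k < (ofColouring f).shortCycleCount k} <
      (B + 1) ^ Fintype.card (Sym2 V) := by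
  set bad := ({f | 3 * k * A ^ k < (ofColouring f).shortCycleCount k} :
    Finset (Sym2 V → Fin (B + 1)))
  have markov : #bad * (3 * k * A ^ k + 1) ≤ k * A ^ k * (B + 1) ^ Fintype.card (Sym2 V) :=
    calc #bad * (3 * k * A ^ k + 1)
        ≤ ∑ f ∈ bad, (ofColouring f).shortCycleCount k := by
          simpa using card_nsmul_le_sum bad _ (3 * k * A ^ k + 1) fun f hf => (mem_filter.1 hf).2
      _ ≤ ∑ f : Sym2 V → Fin (B + 1), (ofColouring f).shortCycleCount k :=
          sum_le_sum_of_subset (subset_univ _)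
      _ ≤ _ := sum_shortCycleCount_ofColouring_le hV k
  refine Nat.lt_of_mul_lt_mul_right (a := 3 * k * A ^ k + 1) ?_
  have hP : 0 < (B + 1) ^ Fintype.card (Sym2 V) := pow_pos B.succ_pos _
  calc 3 * #bad * (3 * k * A ^ k + 1) ≤ 3 * (k * A ^ k * (B + 1) ^ Fintype.card (Sym2 V)) := by
        rw [mul_assoc]; exact Nat.mul_le_mul_left 3 markov
    _ < (B + 1) ^ Fintype.card (Sym2 V) * (3 * k * A ^ k + 1) := by nlinarith

lemma card_filter_hasBipartiteHole_mul_le (s : ℕ) :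
    #{f : Sym2 V → Fin (B + 1) | (ofColouring f).HasBipartiteHole s} * (B + 1) ^ (s * s) ≤
      4 ^ Fintype.card V * B ^ (s * s) * (B + 1) ^ Fintype.card (Sym2 V) := by
  set pairs := ({p | Disjoint p.1 p.2 ∧ #p.1 = s ∧ #p.2 = s} : Finset (Finset V × Finset V))
  have hsub : ({f | (ofColouring f).HasBipartiteHole s} : Finset (Sym2 V → Fin (B + 1))) ⊆
      pairs.biUnion fun p => {f | ∀ u ∈ p.1, ∀ v ∈ p.2, ¬ (ofColouring f).Adj u v} := by
    intro f hf
    obtain ⟨U₁, U₂, hd, h₁, h₂, hU⟩ := (mem_filter.1 hf).2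
    exact mem_biUnion.2 ⟨(U₁, U₂), mem_filter.2 ⟨mem_univ _, hd, h₁, h₂⟩,
      mem_filter.2 ⟨mem_univ _, hU⟩⟩
  have hpairs : #pairs ≤ 4 ^ Fintype.card V := by
    calc #pairs ≤ Fintype.card (Finset V × Finset V) := card_le_univ _
      _ = 4 ^ Fintype.card V := by
        rw [Fintype.card_prod, Fintype.card_finset, ← mul_pow]; norm_num
  calc #({f | (ofColouring f).HasBipartiteHole s} : Finset (Sym2 V → Fin (B + 1))) *
        (B + 1) ^ (s * s)
      ≤ (∑ p ∈ pairs, #({f | ∀ u ∈ p.1, ∀ v ∈ p.2, ¬ (ofColouring f).Adj u v} :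
          Finset (Sym2 V → Fin (B + 1)))) * (B + 1) ^ (s * s) := by
        gcongr
        exact (card_le_card hsub).trans card_biUnion_le
    _ ≤ ∑ _p ∈ pairs, B ^ (s * s) * (B + 1) ^ Fintype.card (Sym2 V) := by
        rw [sum_mul]
        refine sum_le_sum fun p hp => ?_
        obtain ⟨hd, h₁, h₂⟩ := (mem_filter.1 hp).2
        exact card_filter_forall_not_adj_mul_le hd h₁ h₂
    _ ≤ 4 ^ Fintype.card V * B ^ (s * s) * (B + 1) ^ Fintype.card (Sym2 V) := by
        rw [sum_const, smul_eq_mul, mul_assoc]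
        gcongr

lemma three_mul_card_hasBipartiteHole_le {s : ℕ} (hB : 0 < B)
    (hs : 2 * Fintype.card V + 2 ≤ s * s / B) :
    3 * #{f : Sym2 V → Fin (B + 1) | (ofColouring f).HasBipartiteHole s} ≤
      (B + 1) ^ Fintype.card (Sym2 V) := by
  have hboost : 3 * 4 ^ Fintype.card V * B ^ (s * s) ≤ (B + 1) ^ (s * s) :=
    calc 3 * 4 ^ Fintype.card V * B ^ (s * s) ≤ 2 ^ (s * s / B) * B ^ (s * s) := by
          gcongr
          calc 3 * 4 ^ Fintype.card V ≤ 4 ^ Fintype.card V * 4 := by omega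
            _ = 2 ^ (2 * Fintype.card V + 2) := by rw [pow_add, pow_mul]; norm_num
            _ ≤ 2 ^ (s * s / B) := Nat.pow_le_pow_right two_pos hs
      _ ≤ (B + 1) ^ (s * s) := two_pow_div_mul_pow_le_succ_pow hB _
  refine Nat.le_of_mul_le_mul_right ?_ (pow_pos B.succ_pos (s * s))
  calc 3 * #{f : Sym2 V → Fin (B + 1) | (ofColouring f).HasBipartiteHole s} * (B + 1) ^ (s * s)
      ≤ 3 * (4 ^ Fintype.card V * B ^ (s * s) * (B + 1) ^ Fintype.card (Sym2 V)) := by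
        rw [mul_assoc]
        exact Nat.mul_le_mul_left 3 (card_filter_hasBipartiteHole_mul_le s)
    _ ≤ (B + 1) ^ Fintype.card (Sym2 V) * (B + 1) ^ (s * s) := by
        rw [← mul_assoc, ← mul_assoc, mul_comm]
        gcongr

lemma exists_colouring_few_short_cycles_not_hasBipartiteHole {k s : ℕ} (hB : 0 < B)
    (hV : Fintype.card V ≤ A * (B + 1)) (hs : 2 * Fintype.card V + 2 ≤ s * s / B) :
    ∃ f : Sym2 V → Fin (B + 1), (ofColouring f).shortCycleCount k ≤ 3 * k * A ^ k ∧
      ¬ (ofColouring f).HasBipartiteHole s := by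
  set manyCycles := ({f | 3 * k * A ^ k < (ofColouring f).shortCycleCount k} :
    Finset (Sym2 V → Fin (B + 1)))
  set holes := ({f | (ofColouring f).HasBipartiteHole s} : Finset (Sym2 V → Fin (B + 1)))
  have hcyc : 3 * #manyCycles < (B + 1) ^ Fintype.card (Sym2 V) :=
    three_mul_card_many_short_cycles_lt hV k
  have hhole : 3 * #holes ≤ (B + 1) ^ Fintype.card (Sym2 V) :=
    three_mul_card_hasBipartiteHole_le hB hs
  have hlt : #(manyCycles ∪ holes) < #(univ : Finset (Sym2 V → Fin (B + 1))) := by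
    rw [card_univ, Fintype.card_fun, Fintype.card_fin]
    have := card_union_le manyCycles holes
    omega
  obtain ⟨f, -, hf⟩ := exists_mem_notMem_of_card_lt_card hlt
  simp only [manyCycles, holes, mem_union, mem_filter, mem_univ, true_and, not_or, not_lt] at hf
  exact ⟨f, hf⟩

end RandomGraph

end SimpleGraph

lemma four_mul_mul_div_le_ceil_mul_self {α : ℝ} (hα : 0 ≤ α) {c : ℕ} (hc : 4 ≤ α ^ 2 * c)
    (n : ℕ) : 4 * n * (n / c) ≤ ⌈α * n⌉₊ * ⌈α * n⌉₊ := by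
  have hc0 : (0 : ℝ) < c := by
    rcases c.eq_zero_or_pos with rfl | hc0
    · norm_num at hc
    · exact_mod_cast hc0
  have hq : ((n / c : ℕ) : ℝ) * c ≤ n := by exact_mod_cast Nat.div_mul_le_self n c
  have hceil : α * n ≤ ⌈α * n⌉₊ := Nat.le_ceil _
  have hαn : 0 ≤ α * n := by positivity
  suffices h : c * (4 * n * (n / c : ℕ) : ℝ) ≤ c * (⌈α * n⌉₊ * ⌈α * n⌉₊) by
    exact_mod_cast le_of_mul_le_mul_left h hc0
  calc c * (4 * n * (n / c : ℕ) : ℝ) = 4 * n * ((n / c : ℕ) * c) := by ring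
    _ ≤ 4 * n * n := by gcongr
    _ ≤ α ^ 2 * c * n * n := by gcongr
    _ = c * ((α * n) * (α * n)) := by ring
    _ ≤ c * (⌈α * n⌉₊ * ⌈α * n⌉₊) := by gcongr

open RTT in
/-- For any `α > 0` and `k ≥ 3`, for all sufficiently large `n` there is an
`n`-vertex graph `G` with `α*(G) < αn` and girth greater than `k` (no cycle of length
at most `k`). -/
theorem high_girth_small_bipartite_holes :
    ∀ α : ℝ, 0 < α → ∀ k : ℕ, 3 ≤ k →
    ∃ N : ℕ, ∀ n : ℕ, N ≤ n →
      ∃ G : SimpleGraph (Fin n),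
        (∀ (s : ℕ) (U₁ U₂ : Finset (Fin n)), Disjoint U₁ U₂ →
          U₁.card = s → U₂.card = s →
          (∀ u ∈ U₁, ∀ v ∈ U₂, ¬ G.Adj u v) → (s : ℝ) < α * n) ∧
        (∀ (v : Fin n) (p : G.Walk v v), p.IsCycle → k < p.length) := by
  intro α hα k _
  obtain ⟨c, hc⟩ : ∃ c : ℕ, 4 ≤ α ^ 2 * c := by
    obtain ⟨c, hc⟩ := exists_nat_ge (4 / α ^ 2)
    exact ⟨c, by rwa [div_le_iff₀ (by positivity), mul_comm] at hc⟩
  have hc0 : 0 < c := Nat.pos_of_ne_zero fun h => by norm_num [h] at hc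
  set T := 3 * k * (4 * c) ^ k
  refine ⟨c + k * T + 1, fun n hn => ?_⟩
  have hB : 0 < n / c := Nat.div_pos (by omega) hc0
  have hV : Fintype.card (Fin (n + k * T)) ≤ 4 * c * (n / c + 1) := by
    have := Nat.lt_mul_div_succ n hc0
    rw [Fintype.card_fin, mul_assoc]
    omega
  have hs : 2 * Fintype.card (Fin (n + k * T)) + 2 ≤ ⌈α * n⌉₊ * ⌈α * n⌉₊ / (n / c) := by
    rw [Fintype.card_fin, Nat.le_div_iff_mul_le hB]
    calc (2 * (n + k * T) + 2) * (n / c) ≤ 4 * n * (n / c) := by gcongr; omega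
      _ ≤ ⌈α * n⌉₊ * ⌈α * n⌉₊ := four_mul_mul_div_le_ceil_mul_self hα.le hc n
  obtain ⟨f, hcyc, hhole⟩ :=
    SimpleGraph.exists_colouring_few_short_cycles_not_hasBipartiteHole (k := k) hB hV hs
  obtain ⟨e, hgirth⟩ := (SimpleGraph.ofColouring f).exists_embedding_girth_gt (n := n) (k := k)
    (by rw [Fintype.card_fin]; exact Nat.add_le_add_left (Nat.mul_le_mul_left k hcyc) n)
  refine ⟨(SimpleGraph.ofColouring f).comap e, fun s U₁ U₂ hd h₁ h₂ hU => ?_, hgirth⟩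
  refine Nat.lt_ceil.1 (lt_of_not_ge fun hs => hhole ?_)
  exact (SimpleGraph.HasBipartiteHole.of_comap ⟨U₁, U₂, hd, h₁, h₂, hU⟩).mono hs
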